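/- arXiv:1804.07282 — 4 statements merged into one kernel-verified Lean document; each statement's English description precedes it below -/
import Mathlib

section
/- Let K̃ ⊆ Ṽ ⊗ k be a characteristic subspace with v ⊗ 1 ∉ K̃ and let K = π_v(K̃). Then the Artin invariant of K̃ equals σ0(K) + 1 if {x ∈ Ṽ : x ⊗ 1 ∈ K̃} ⊆ v^⊥, and equals σ0(K) otherwise. Here σ0(K̃) = (σ0 + 1) − dim_{F_p}{x ∈ Ṽ : x ⊗ 1 ∈ K̃} and σ0(K) = σ0 − dim_{F_p}{x ∈ V : x ⊗ 1 ∈ K}. -/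
open TensorProduct

section Basics

variable (p : ℕ) [Fact p.Prime]
variable (k : Type*) [Field k] [CharP k p] [Algebra (ZMod p) k]

/-- The `p`-th power map on `k` as a `ZMod p`-linear map. -/
noncomputable def frobL : k →ₗ[ZMod p] k where
  toFun x := x ^ p
  map_add' x y := add_pow_char x y p
  map_smul' c x := by
    simp only [Algebra.smul_def, mul_pow, RingHom.id_apply]
    congr 1
    rw [← map_pow, ZMod.pow_card]

@[simp] lemma frobL_apply (x : k) : frobL p k x = x ^ p := rfl

instance frobSurj [IsAlgClosed k] : RingHomSurjective (frobenius k p) := by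
  constructor
  intro y
  obtain ⟨z, hz⟩ := IsAlgClosed.exists_pow_nat_eq y (n := p) (Fact.out (p := p.Prime)).pos
  exact ⟨z, by simpa [frobenius_def] using hz⟩

variable (V : Type*) [AddCommGroup V] [Module (ZMod p) V]

private lemma rT_smul (c : k) (m : k ⊗[ZMod p] V) :
    LinearMap.rTensor V (frobL p k) (c • m) = c ^ p • LinearMap.rTensor V (frobL p k) m := by
  induction m using TensorProduct.induction_on with
  | zero => simp
  | tmul a x => simp [TensorProduct.smul_tmul', smul_eq_mul, mul_pow]
  | add x y hx hy => simp [smul_add, hx, hy]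

/-- The Frobenius-semilinear bijection `φ` of `k ⊗ V` determined by `φ(s ⊗ x) = s^p ⊗ x`. -/
noncomputable def phiT : (k ⊗[ZMod p] V) →ₛₗ[frobenius k p] (k ⊗[ZMod p] V) where
  toFun := LinearMap.rTensor V (frobL p k)
  map_add' x y := map_add _ x y
  map_smul' c m := by
    show LinearMap.rTensor V (frobL p k) (c • m) = (frobenius k p) c • LinearMap.rTensor V (frobL p k) m
    rw [rT_smul, frobenius_def]

@[simp] lemma phiT_apply (m : k ⊗[ZMod p] V) :
    phiT p k V m = LinearMap.rTensor V (frobL p k) m := rfl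

/-- A bilinear form is non-degenerate if its radical is zero. -/
def Nondeg {R M : Type*} [CommSemiring R] [AddCommMonoid M] [Module R M]
    (b : M →ₗ[R] M →ₗ[R] R) : Prop :=
  ∀ x, (∀ y, b x y = 0) → x = 0

/-- A bilinear form is non-neutral if there is no totally isotropic subspace of half
dimension. -/
def NonNeutral {R M : Type*} [CommRing R] [AddCommGroup M] [Module R M]
    (b : M →ₗ[R] M →ₗ[R] R) : Prop :=
  ¬ ∃ W : Submodule R M, (∀ x ∈ W, ∀ y ∈ W, b x y = 0) ∧
      2 * Module.finrank R ↥W = Module.finrank R M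

variable {p k V}

/-- A characteristic subspace of `V ⊗ k`, where `dim V = 2σ₀`: a totally isotropic
`k`-subspace of dimension `σ₀` with `dim (K + φ K) = σ₀ + 1`. -/
def IsCharSub [IsAlgClosed k] (σ₀ : ℕ) (b : LinearMap.BilinForm (ZMod p) V)
    (K : Submodule k (k ⊗[ZMod p] V)) : Prop :=
  (∀ x ∈ K, ∀ y ∈ K, b.baseChange k x y = 0) ∧
  Module.finrank k ↥K = σ₀ ∧
  Module.finrank k ↥(K ⊔ K.map (phiT p k V)) = σ₀ + 1

/-- `{x ∈ V : x ⊗ 1 ∈ K}` as an `𝔽_p`-subspace of `V`. -/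
def KcapV (K : Submodule k (k ⊗[ZMod p] V)) : Submodule (ZMod p) V where
  carrier := {x | (1 : k) ⊗ₜ[ZMod p] x ∈ K}
  add_mem' := by
    intro a b ha hb
    simp only [Set.mem_setOf_eq] at *
    rw [TensorProduct.tmul_add]
    exact K.add_mem ha hb
  zero_mem' := by
    simp only [Set.mem_setOf_eq, TensorProduct.tmul_zero]
    exact K.zero_mem
  smul_mem' := by
    intro c x hx
    simp only [Set.mem_setOf_eq] at *
    rw [TensorProduct.tmul_smul]
    exact K.smul_of_tower_mem c hx

end Basics

section Quot

variable {p : ℕ} [Fact p.Prime]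
variable {Vt : Type*} [AddCommGroup Vt] [Module (ZMod p) Vt]

/-- The orthogonal complement of a vector. -/
def perp (b : LinearMap.BilinForm (ZMod p) Vt) (v : Vt) : Submodule (ZMod p) Vt :=
  LinearMap.ker (b v)

lemma self_mem_perp {b : LinearMap.BilinForm (ZMod p) Vt} {v : Vt} (hv : b v v = 0) :
    v ∈ perp b v := LinearMap.mem_ker.mpr hv

/-- The line spanned by an isotropic vector `v`, inside `v^⊥`. -/
noncomputable def lineV (b : LinearMap.BilinForm (ZMod p) Vt) (v : Vt) (hv : b v v = 0) :
    Submodule (ZMod p) (perp b v) :=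
  Submodule.span (ZMod p) {⟨v, self_mem_perp hv⟩}

lemma lineV_le (b : LinearMap.BilinForm (ZMod p) Vt) (v : Vt) (hv : b v v = 0)
    {P : Submodule (ZMod p) (perp b v)}
    (h : (⟨v, self_mem_perp hv⟩ : perp b v) ∈ P) : lineV b v hv ≤ P :=
  Submodule.span_le.mpr (Set.singleton_subset_iff.mpr h)

/-- The quotient `v^⊥ / ⟨v⟩`. -/
noncomputable abbrev Vquot (b : LinearMap.BilinForm (ZMod p) Vt) (v : Vt)
    (hv : b v v = 0) := (perp b v) ⧸ (lineV b v hv)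

/-- Restriction of the form to `v^⊥`. -/
noncomputable def bRes (b : LinearMap.BilinForm (ZMod p) Vt) (v : Vt) :
    LinearMap.BilinForm (ZMod p) (perp b v) :=
  b.compl₁₂ (perp b v).subtype (perp b v).subtype

lemma bRes_apply (b : LinearMap.BilinForm (ZMod p) Vt) (v : Vt) (x y : perp b v) :
    bRes b v x y = b x y := by
  simp [bRes]

noncomputable def bQuotAux (b : LinearMap.BilinForm (ZMod p) Vt) (v : Vt)
    (hsymm : ∀ x y, b x y = b y x) (hv : b v v = 0) :
    (perp b v) →ₗ[ZMod p] (Vquot b v hv) →ₗ[ZMod p] (ZMod p) where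
  toFun x := Submodule.liftQ (lineV b v hv) (bRes b v x) (lineV_le b v hv (by
    rw [LinearMap.mem_ker, bRes_apply, hsymm]
    exact LinearMap.mem_ker.mp x.2))
  map_add' x y := by
    apply LinearMap.ext
    intro z
    obtain ⟨w, rfl⟩ := Submodule.Quotient.mk_surjective _ z
    simp only [Submodule.liftQ_apply, LinearMap.add_apply, bRes_apply,
      Submodule.coe_add, map_add]
  map_smul' c x := by
    apply LinearMap.ext
    intro z
    obtain ⟨w, rfl⟩ := Submodule.Quotient.mk_surjective _ z
    simp only [Submodule.liftQ_apply, LinearMap.smul_apply, bRes_apply,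
      Submodule.coe_smul, map_smul, RingHom.id_apply, smul_eq_mul]

/-- The symmetric bilinear form induced on `v^⊥/⟨v⟩` by the form of `Ṽ`. -/
noncomputable def bQuot (b : LinearMap.BilinForm (ZMod p) Vt) (v : Vt)
    (hsymm : ∀ x y, b x y = b y x) (hv : b v v = 0) :
    LinearMap.BilinForm (ZMod p) (Vquot b v hv) :=
  Submodule.liftQ (lineV b v hv) (bQuotAux b v hsymm hv) (lineV_le b v hv (by
    rw [LinearMap.mem_ker]
    apply LinearMap.ext
    intro z
    obtain ⟨w, rfl⟩ := Submodule.Quotient.mk_surjective _ z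
    simp only [bQuotAux, LinearMap.coe_mk, AddHom.coe_mk, Submodule.liftQ_apply,
      bRes_apply, LinearMap.zero_apply]
    exact LinearMap.mem_ker.mp w.2))

variable (k : Type*) [Field k] [CharP k p] [Algebra (ZMod p) k]

/-- The base change to `k` of the inclusion `v^⊥ ⊆ Ṽ`. -/
noncomputable def iotaPerp (b : LinearMap.BilinForm (ZMod p) Vt) (v : Vt) :
    (k ⊗[ZMod p] ↥(perp b v)) →ₗ[k] (k ⊗[ZMod p] Vt) :=
  LinearMap.baseChange k (perp b v).subtype

/-- The base change to `k` of the quotient map `v^⊥ → v^⊥/⟨v⟩`. -/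
noncomputable def qMap (b : LinearMap.BilinForm (ZMod p) Vt) (v : Vt) (hv : b v v = 0) :
    (k ⊗[ZMod p] ↥(perp b v)) →ₗ[k] (k ⊗[ZMod p] (Vquot b v hv)) :=
  LinearMap.baseChange k (lineV b v hv).mkQ

/-- `π_v(K̃)`: the image of `K̃ ∩ (v^⊥ ⊗ k)` under the quotient map
`v^⊥ ⊗ k → (v^⊥/⟨v⟩) ⊗ k`. -/
noncomputable def piV (b : LinearMap.BilinForm (ZMod p) Vt) (v : Vt) (hv : b v v = 0)
    (K : Submodule k (k ⊗[ZMod p] Vt)) : Submodule k (k ⊗[ZMod p] (Vquot b v hv)) :=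
  (K.comap (iotaPerp k b v)).map (qMap k b v hv)

end Quot
section Decomp

variable {p : ℕ} [Fact p.Prime]
variable {k : Type*} [Field k] [CharP k p] [Algebra (ZMod p) k]
variable {V Vt : Type*} [AddCommGroup V] [Module (ZMod p) V]
  [AddCommGroup Vt] [Module (ZMod p) Vt]

/-- The characteristic subspace `K(B)` of `Ṽ ⊗ k` attached to a characteristic subspace
`K ⊆ V ⊗ k` and a vector `B ∈ V ⊗ k`: the span of `{x + ⟨x,B⟩v : x ∈ K}` together with
`w + B + (B²/2)v`. -/
noncomputable def KB (bV : LinearMap.BilinForm (ZMod p) V) (j : V →ₗ[ZMod p] Vt)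
    (v w : Vt) (K : Submodule k (k ⊗[ZMod p] V)) (B : k ⊗[ZMod p] V) :
    Submodule k (k ⊗[ZMod p] Vt) :=
  Submodule.span k
    (((fun x => LinearMap.baseChange k j x + (bV.baseChange k x B) • ((1 : k) ⊗ₜ[ZMod p] v)) '' K) ∪
      {(1 : k) ⊗ₜ[ZMod p] w + LinearMap.baseChange k j B +
        ((bV.baseChange k B B) / 2) • ((1 : k) ⊗ₜ[ZMod p] v)})

/-- `π_v(K̃)` computed using the fixed orthogonal decomposition `Ṽ = V ⊕ ⟨v,w⟩`:
the subspace of those `x ∈ V ⊗ k` admitting a lift `x + c·(v ⊗ 1)` lying in `K̃`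
(equivalently, whose image in `Ṽ ⊗ k` lies in `K̃ + ⟨v ⊗ 1⟩`). -/
noncomputable def projSub (j : V →ₗ[ZMod p] Vt) (v : Vt)
    (Kt : Submodule k (k ⊗[ZMod p] Vt)) : Submodule k (k ⊗[ZMod p] V) :=
  (Kt ⊔ Submodule.span k {(1 : k) ⊗ₜ[ZMod p] v}).comap (LinearMap.baseChange k j)

lemma mem_projSub {j : V →ₗ[ZMod p] Vt} {v : Vt} {Kt : Submodule k (k ⊗[ZMod p] Vt)}
    (x : k ⊗[ZMod p] V) (c : k)
    (h : LinearMap.baseChange k j x + c • ((1 : k) ⊗ₜ[ZMod p] v) ∈ Kt) :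
    x ∈ projSub j v Kt := by
  have : LinearMap.baseChange k j x
      = (LinearMap.baseChange k j x + c • ((1 : k) ⊗ₜ[ZMod p] v))
        + (-c) • ((1 : k) ⊗ₜ[ZMod p] v) := by
    rw [add_assoc, ← add_smul, add_neg_cancel, zero_smul, add_zero]
  rw [projSub, Submodule.mem_comap, this]
  exact Submodule.add_mem _ (Submodule.mem_sup_left h)
    (Submodule.mem_sup_right (Submodule.smul_mem _ _ (Submodule.mem_span_singleton_self _)))

variable [IsAlgClosed k]

/-- The condition `B - φ(B) ∈ K + φ(K)` defining `U(K)` before quotienting. -/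
def UCond (K : Submodule k (k ⊗[ZMod p] V)) (B : k ⊗[ZMod p] V) : Prop :=
  B - phiT p k V B ∈ K ⊔ K.map (phiT p k V)

/-- `{B ∈ V ⊗ k : B - φ(B) ∈ K + φ(K)}` as an additive group. -/
def Ugrp (K : Submodule k (k ⊗[ZMod p] V)) : AddSubgroup (k ⊗[ZMod p] V) where
  carrier := {B | B - phiT p k V B ∈ K ⊔ K.map (phiT p k V)}
  add_mem' := by
    intro a b ha hb
    simp only [Set.mem_setOf_eq] at *
    have e : a + b - phiT p k V (a + b) = (a - phiT p k V a) + (b - phiT p k V b) := by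
      rw [map_add]; abel
    rw [e]; exact Submodule.add_mem _ ha hb
  zero_mem' := by
    simp only [Set.mem_setOf_eq, map_zero, sub_zero]
    exact Submodule.zero_mem _
  neg_mem' := by
    intro a ha
    simp only [Set.mem_setOf_eq] at *
    have e : -a - phiT p k V (-a) = -(a - phiT p k V a) := by
      rw [map_neg]; abel
    rw [e]; exact Submodule.neg_mem _ ha

lemma mem_Ugrp {K : Submodule k (k ⊗[ZMod p] V)} {B : k ⊗[ZMod p] V} :
    B ∈ Ugrp K ↔ B - phiT p k V B ∈ K ⊔ K.map (phiT p k V) := Iff.rfl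

/-- The group `U(K) = {B : B - φ(B) ∈ K + φ(K)}/K`. -/
noncomputable abbrev UK (K : Submodule k (k ⊗[ZMod p] V)) :=
  (↥(Ugrp K)) ⧸ ((K.toAddSubgroup).addSubgroupOf (Ugrp K))

lemma one_tmul_mem_Ugrp (K : Submodule k (k ⊗[ZMod p] V)) (x : V) :
    (1 : k) ⊗ₜ[ZMod p] x ∈ Ugrp K := by
  have h : phiT p k V ((1 : k) ⊗ₜ[ZMod p] x) = (1 : k) ⊗ₜ[ZMod p] x := by
    rw [phiT_apply, LinearMap.rTensor_tmul, frobL_apply, one_pow]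
  rw [mem_Ugrp, h, sub_self]
  exact Submodule.zero_mem _

/-- The natural map `V → U(K)`, `x ↦ (x ⊗ 1) mod K`. -/
noncomputable def toUK (K : Submodule k (k ⊗[ZMod p] V)) : V →+ UK K :=
  (QuotientAddGroup.mk' ((K.toAddSubgroup).addSubgroupOf (Ugrp K))).comp
    (AddMonoidHom.codRestrict
      (((TensorProduct.mk (ZMod p) k V) (1 : k)).toAddMonoidHom) (Ugrp K)
      (fun x => one_tmul_mem_Ugrp K x))

/-- Iterates `φ^i(K)`. -/
noncomputable def phiPow (i : ℕ) (K : Submodule k (k ⊗[ZMod p] V)) :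
    Submodule k (k ⊗[ZMod p] V) :=
  (fun S : Submodule k (k ⊗[ZMod p] V) => S.map (phiT p k V))^[i] K

end Decomp

/-!
Let `W = K̃ ∩ Ṽ`. If `x + c v` with `x ∈ v^⊥` lies in `K̃`, then `c ∈ 𝔽_p`: otherwise `φ` moves
this vector by a nonzero multiple of `v`, so `v ∈ K̃ + φ(K̃)` is orthogonal to `K̃ ∩ φ(K̃)`, a
hyperplane of `K̃` complementary to `x + c v`, which is itself orthogonal to `v`; hence `v` lies in
`K̃^⊥ = K̃`, which is excluded. Consequently the rational points of `π_v(K̃)` are exactly the images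
of `W ∩ v^⊥`, on which the projection is injective since `v ∉ W`. Finally `W ∩ v^⊥` is `W` or a
hyperplane of `W`, and non-neutrality forces `dim W ≤ σ₀`.
-/

section LinearAlgebra

open LinearMap (BilinForm)

variable {K V : Type*} [Field K] [AddCommGroup V] [Module K V]

theorem Submodule.finrank_baseChange (A : Type*) [Field A] [Algebra K A] (W : Submodule K V) :
    Module.finrank A (W.baseChange A) = Module.finrank K W := by
  rw [Submodule.baseChange, LinearMap.finrank_range_of_inj, Module.finrank_baseChange]
  rw [LinearMap.baseChange_eq_ltensor]
  exact Module.Flat.lTensor_preserves_injective_linearMap _ W.injective_subtype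

theorem Submodule.finrank_inf_ker_add_one {W : Submodule K V} [FiniteDimensional K W]
    {f : Module.Dual K V} (hW : ¬ W ≤ LinearMap.ker f) :
    Module.finrank K ↥(W ⊓ LinearMap.ker f) + 1 = Module.finrank K W := by
  have hf : f.domRestrict W ≠ 0 := fun h =>
    hW fun x hx => by simpa using LinearMap.congr_fun h ⟨x, hx⟩
  rw [← Module.Dual.finrank_ker_add_one_of_ne_zero hf, LinearMap.ker_domRestrict,
    ← Submodule.finrank_map_subtype_eq, Submodule.map_comap_subtype]

theorem Submodule.finrank_map_mkQ_of_disjoint {S N : Submodule K V} (h : Disjoint S N) :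
    Module.finrank K (S.map N.mkQ) = Module.finrank K S := by
  rw [← Submodule.range_subtype S, ← LinearMap.range_comp, LinearMap.finrank_range_of_inj,
    Submodule.range_subtype]
  rwa [← LinearMap.ker_eq_bot, LinearMap.ker_comp, Submodule.ker_mkQ,
    ← Submodule.disjoint_iff_comap_eq_bot]

theorem Submodule.ker_baseChange_mkQ {R M : Type*} (A : Type*) [CommRing R] [AddCommGroup M]
    [Module R M] [CommRing A] [Algebra R A] (N : Submodule R M) :
    LinearMap.ker (N.mkQ.baseChange A) = N.baseChange A := by
  ext x
  have := SetLike.ext_iff.mp (lTensor_mkQ A N) x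
  simpa [Submodule.baseChange, LinearMap.baseChange_eq_ltensor] using this

theorem LinearMap.BilinForm.Nondegenerate.baseChange {L : Type*} [Field L] [Algebra K L]
    [FiniteDimensional K V] {b : BilinForm K V}
    (hb : b.Nondegenerate) : (b.baseChange L).Nondegenerate := by
  classical
  let e := Module.finBasis K V
  have hM : BilinForm.toMatrix (e.baseChange L) (b.baseChange L)
      = (algebraMap K L).mapMatrix (BilinForm.toMatrix e b) := by
    ext i j
    simp [BilinForm.toMatrix_apply, Algebra.smul_def]
  rw [BilinForm.nondegenerate_iff_det_ne_zero (e.baseChange L), hM, ← RingHom.map_det,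
    map_ne_zero_iff _ (algebraMap K L).injective]
  exact (BilinForm.nondegenerate_iff_det_ne_zero e).mp hb

theorem LinearMap.BilinForm.orthogonal_eq_self_of_isotropic [FiniteDimensional K V]
    {B : BilinForm K V} (hB : B.Nondegenerate) {L : Submodule K V}
    (hL : ∀ x ∈ L, ∀ y ∈ L, B x y = 0)
    (hdim : 2 * Module.finrank K L = Module.finrank K V) : B.orthogonal L = L := by
  have hle : L ≤ B.orthogonal L := fun y hy =>
    BilinForm.mem_orthogonal_iff.mpr fun x hx => hL x hx y hy
  refine (Submodule.eq_of_le_of_finrank_le hle ?_).symm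
  rw [BilinForm.finrank_orthogonal hB]
  omega

theorem Submodule.sup_span_singleton_eq_of_finrank_add_one {L M : Submodule K V}
    [FiniteDimensional K M] (hLM : L ≤ M) (hdim : Module.finrank K L + 1 = Module.finrank K M)
    {x : V} (hxM : x ∈ M) (hxL : x ∉ L) :
    L ⊔ Submodule.span K {x} = M := by
  have hlt : L < L ⊔ Submodule.span K {x} :=
    lt_of_le_of_ne le_sup_left fun h => hxL (h ▸ Submodule.mem_sup_right
      (Submodule.mem_span_singleton_self x))
  have hle : L ⊔ Submodule.span K {x} ≤ M :=
    sup_le hLM ((Submodule.span_singleton_le_iff_mem _ _).mpr hxM)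
  refine Submodule.eq_of_le_of_finrank_le hle ?_
  have : FiniteDimensional K ↥(L ⊔ Submodule.span K {x}) := Submodule.finiteDimensional_of_le hle
  have := Submodule.finrank_lt_finrank_of_lt hlt
  omega

end LinearAlgebra

section Frobenius

variable {p : ℕ} [Fact p.Prime] {k : Type*} [Field k] [Algebra (ZMod p) k]

theorem mem_range_algebraMap_of_pow_eq_self {c : k} (hc : c ^ p = c) :
    c ∈ (algebraMap (ZMod p) k).range :=
  (GaloisField.splits_zmod_X_pow_sub_X p).mem_range_of_isRoot
    (by simpa [ZMod.card] using
      FiniteField.X_pow_card_sub_X_ne_zero (ZMod p) (Fact.out : p.Prime).one_lt)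
    (by simp [hc])

variable [CharP k p] {V : Type*} [AddCommGroup V] [Module (ZMod p) V]

theorem phiT_tmul (s : k) (x : V) : phiT p k V (s ⊗ₜ[ZMod p] x) = (s ^ p) ⊗ₜ[ZMod p] x := rfl

theorem phiT_one_tmul (x : V) : phiT p k V ((1 : k) ⊗ₜ[ZMod p] x) = (1 : k) ⊗ₜ[ZMod p] x := by
  rw [phiT_tmul, one_pow]

theorem phiT_injective : Function.Injective (phiT p k V) :=
  Module.Flat.rTensor_preserves_injective_linearMap (frobL p k) (frobenius_inj k p)

theorem baseChange_phiT_phiT (b : LinearMap.BilinForm (ZMod p) V) (x y : k ⊗[ZMod p] V) :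
    b.baseChange k (phiT p k V x) (phiT p k V y) = b.baseChange k x y ^ p := by
  have hp0 : p ≠ 0 := (Fact.out : p.Prime).ne_zero
  induction x using TensorProduct.induction_on with
  | zero => simp [hp0]
  | add x₁ x₂ h₁ h₂ => simp only [map_add, LinearMap.add_apply, h₁, h₂, add_pow_char]
  | tmul s x =>
    induction y using TensorProduct.induction_on with
    | zero => simp [hp0]
    | add y₁ y₂ h₁ h₂ => simp only [map_add, h₁, h₂, add_pow_char]
    | tmul t y =>
      simp only [phiT_tmul, LinearMap.BilinForm.baseChange_tmul, Algebra.smul_def, mul_pow,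
        ← map_pow, ZMod.pow_card]

theorem finrank_map_phiT [IsAlgClosed k] (K : Submodule k (k ⊗[ZMod p] V)) :
    Module.finrank k (K.map (phiT p k V)) = Module.finrank k K := by
  let f := (phiT p k V).submoduleMap K
  have hf : Function.Bijective f :=
    ⟨fun x y h => Subtype.ext (phiT_injective (congrArg Subtype.val h)),
      LinearMap.submoduleMap_surjective _ K⟩
  have hrank := rank_eq_of_equiv_equiv (frobenius k p) (AddEquiv.ofBijective f hf)
    (bijective_frobenius k p) (fun c x => f.map_smulₛₗ c x)
  exact congrArg Cardinal.toNat hrank.symm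

end Frobenius

namespace IsCharSub

variable {p : ℕ} [Fact p.Prime] {k : Type*} [Field k] [IsAlgClosed k] [CharP k p]
  [Algebra (ZMod p) k] {V : Type*} [AddCommGroup V] [Module (ZMod p) V]
  {σ₀ : ℕ} {b : LinearMap.BilinForm (ZMod p) V} {K : Submodule k (k ⊗[ZMod p] V)}

theorem isotropic_map_phiT (hK : IsCharSub σ₀ b K) :
    ∀ x ∈ K.map (phiT p k V), ∀ y ∈ K.map (phiT p k V), b.baseChange k x y = 0 := by
  rintro _ ⟨x, hx, rfl⟩ _ ⟨y, hy, rfl⟩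
  rw [baseChange_phiT_phiT, hK.1 x hx y hy, zero_pow (Fact.out : p.Prime).ne_zero]

theorem apply_eq_zero_of_mem_inf_of_mem_sup (hK : IsCharSub σ₀ b K) {l u : k ⊗[ZMod p] V}
    (hl : l ∈ K ⊓ K.map (phiT p k V)) (hu : u ∈ K ⊔ K.map (phiT p k V)) :
    b.baseChange k l u = 0 := by
  obtain ⟨a, ha, a', ha', rfl⟩ := Submodule.mem_sup.mp hu
  rw [map_add, hK.1 l hl.1 a ha, hK.isotropic_map_phiT l hl.2 a' ha', add_zero]

theorem finrank_inf_map_phiT_add_one [FiniteDimensional (ZMod p) V] (hK : IsCharSub σ₀ b K) :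
    Module.finrank k ↥(K ⊓ K.map (phiT p k V)) + 1 = σ₀ := by
  have h := Submodule.finrank_sup_add_finrank_inf_eq K (K.map (phiT p k V))
  rw [finrank_map_phiT, hK.2.1, hK.2.2] at h
  omega

theorem orthogonal_eq [FiniteDimensional (ZMod p) V] (hK : IsCharSub σ₀ b K)
    (hnd : b.Nondegenerate) (hdim : Module.finrank (ZMod p) V = 2 * σ₀) :
    (b.baseChange k).orthogonal K = K :=
  LinearMap.BilinForm.orthogonal_eq_self_of_isotropic hnd.baseChange hK.1
    (by rw [hK.2.1, Module.finrank_baseChange, hdim])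

theorem pow_eq_self_of_add_smul_mem [FiniteDimensional (ZMod p) V] (hK : IsCharSub σ₀ b K)
    (hb : b.IsSymm) (hnd : b.Nondegenerate) (hdim : Module.finrank (ZMod p) V = 2 * σ₀)
    {v x : V} (hv : b v v = 0) (hvK : (1 : k) ⊗ₜ[ZMod p] v ∉ K) (hx : b v x = 0) {c : k}
    (hmem : (1 : k) ⊗ₜ[ZMod p] x + c • (1 : k) ⊗ₜ[ZMod p] v ∈ K) : c ^ p = c := by
  by_contra hne
  have hδ : c ^ p - c ≠ 0 := sub_ne_zero.mpr hne
  set u := (1 : k) ⊗ₜ[ZMod p] v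
  set η := (1 : k) ⊗ₜ[ZMod p] x + c • u
  have hφη : phiT p k V η - η = (c ^ p - c) • u := by
    simp only [η, u, map_add, LinearMap.map_smulₛₗ, phiT_one_tmul, frobenius_def]
    rw [add_sub_add_left_eq_sub, ← sub_smul]
  have hu : u = (c ^ p - c)⁻¹ • (phiT p k V η - η) := by rw [hφη, inv_smul_smul₀ hδ]
  have hη : η ∉ K.map (phiT p k V) := by
    intro hηφ
    obtain ⟨ξ, hξ, hξu⟩ : u ∈ K.map (phiT p k V) :=
      hu ▸ Submodule.smul_mem _ _ (Submodule.sub_mem _ ⟨η, hmem, rfl⟩ hηφ)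
    rw [phiT_injective (hξu.trans (phiT_one_tmul v).symm)] at hξ
    exact hvK hξ
  have hdecomp : K ⊓ K.map (phiT p k V) ⊔ Submodule.span k {η} = K :=
    Submodule.sup_span_singleton_eq_of_finrank_add_one inf_le_left
      (by rw [hK.finrank_inf_map_phiT_add_one, hK.2.1]) hmem (fun h => hη h.2)
  have huφ : u ∈ K ⊔ K.map (phiT p k V) := hu ▸ Submodule.smul_mem _ _ (Submodule.sub_mem _
    (Submodule.mem_sup_right ⟨η, hmem, rfl⟩) (Submodule.mem_sup_left hmem))
  have hηu : b.baseChange k η u = 0 := by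
    simp [η, u, hv, hb.eq x v, hx]
  refine hvK ((hK.orthogonal_eq hnd hdim).le (LinearMap.BilinForm.mem_orthogonal_iff.mpr ?_))
  intro n hn
  rw [← hdecomp] at hn
  obtain ⟨l, hl, _, ht, rfl⟩ := Submodule.mem_sup.mp hn
  obtain ⟨t, rfl⟩ := Submodule.mem_span_singleton.mp ht
  show b.baseChange k (l + t • η) u = 0
  rw [map_add, map_smul, LinearMap.add_apply, LinearMap.smul_apply, hηu, smul_zero, add_zero,
    hK.apply_eq_zero_of_mem_inf_of_mem_sup hl huφ]

end IsCharSub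

section RationalPoints

variable {p : ℕ} [Fact p.Prime] {k : Type*} [Field k] [Algebra (ZMod p) k]
  {V : Type*} [AddCommGroup V] [Module (ZMod p) V]

theorem baseChange_KcapV_le (K : Submodule k (k ⊗[ZMod p] V)) : (KcapV K).baseChange k ≤ K := by
  rw [Submodule.baseChange_eq_span, Submodule.span_le]
  rintro _ ⟨x, hx, rfl⟩
  exact hx

theorem finrank_KcapV_le [FiniteDimensional (ZMod p) V] (K : Submodule k (k ⊗[ZMod p] V)) :
    Module.finrank (ZMod p) (KcapV K) ≤ Module.finrank k K :=
  (Submodule.finrank_baseChange k (KcapV K)) ▸ Submodule.finrank_mono (baseChange_KcapV_le K)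

theorem isotropic_KcapV {b : LinearMap.BilinForm (ZMod p) V} {K : Submodule k (k ⊗[ZMod p] V)}
    (hK : ∀ x ∈ K, ∀ y ∈ K, b.baseChange k x y = 0) :
    ∀ x ∈ KcapV K, ∀ y ∈ KcapV K, b x y = 0 := by
  intro x hx y hy
  simpa using hK _ hx _ hy

theorem IsCharSub.finrank_KcapV_lt [CharP k p] [IsAlgClosed k] [FiniteDimensional (ZMod p) V]
    {σ₀ : ℕ} {b : LinearMap.BilinForm (ZMod p) V} {K : Submodule k (k ⊗[ZMod p] V)}
    (hK : IsCharSub σ₀ b K) (hnn : NonNeutral b)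
    (hdim : Module.finrank (ZMod p) V = 2 * σ₀) : Module.finrank (ZMod p) (KcapV K) < σ₀ := by
  have hle := hK.2.1 ▸ finrank_KcapV_le K
  refine lt_of_le_of_ne hle fun heq => hnn ⟨KcapV K, isotropic_KcapV hK.1, ?_⟩
  rw [heq, hdim]

end RationalPoints

section Projection

variable {p : ℕ} [Fact p.Prime] {k : Type*} [Field k] [Algebra (ZMod p) k]
  {Vt : Type*} [AddCommGroup Vt] [Module (ZMod p) Vt]
  {b : LinearMap.BilinForm (ZMod p) Vt} {v : Vt} (hv : b v v = 0)

theorem ker_qMap : LinearMap.ker (qMap k b v hv) =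
    Submodule.span k {(1 : k) ⊗ₜ[ZMod p] (⟨v, self_mem_perp hv⟩ : perp b v)} := by
  rw [qMap, Submodule.ker_baseChange_mkQ, lineV, Submodule.baseChange_span, Set.image_singleton,
    TensorProduct.mk_apply]

theorem exists_eq_one_tmul_add_smul (z : Vquot b v hv) {ξ : k ⊗[ZMod p] perp b v}
    (hξ : qMap k b v hv ξ = (1 : k) ⊗ₜ[ZMod p] z) :
    ∃ s : perp b v, ∃ c : k, (lineV b v hv).mkQ s = z ∧
      ξ = (1 : k) ⊗ₜ[ZMod p] s + c • (1 : k) ⊗ₜ[ZMod p] (⟨v, self_mem_perp hv⟩ : perp b v) := by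
  obtain ⟨s, rfl⟩ := (lineV b v hv).mkQ_surjective z
  have hker : ξ - (1 : k) ⊗ₜ[ZMod p] s ∈ LinearMap.ker (qMap k b v hv) := by
    rw [LinearMap.mem_ker, map_sub, hξ, qMap, LinearMap.baseChange_tmul, sub_self]
  rw [ker_qMap, Submodule.mem_span_singleton] at hker
  obtain ⟨c, hc⟩ := hker
  exact ⟨s, c, rfl, by rw [hc, add_sub_cancel]⟩

variable [CharP k p] [IsAlgClosed k] [FiniteDimensional (ZMod p) Vt] {σ₀ : ℕ}
  {Kt : Submodule k (k ⊗[ZMod p] Vt)}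

theorem KcapV_piV (hKt : IsCharSub σ₀ b Kt) (hb : b.IsSymm) (hnd : b.Nondegenerate)
    (hdim : Module.finrank (ZMod p) Vt = 2 * σ₀) (hvK : (1 : k) ⊗ₜ[ZMod p] v ∉ Kt) :
    KcapV (piV k b v hv Kt) = ((KcapV Kt).comap (perp b v).subtype).map (lineV b v hv).mkQ := by
  ext z
  constructor
  · rintro ⟨ξ, hξK, hξz⟩
    obtain ⟨s, c, rfl, rfl⟩ := exists_eq_one_tmul_add_smul hv z hξz
    have hmem : (1 : k) ⊗ₜ[ZMod p] (s : Vt) + c • (1 : k) ⊗ₜ[ZMod p] v ∈ Kt := by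
      simpa [iotaPerp] using hξK
    obtain ⟨r, rfl⟩ := mem_range_algebraMap_of_pow_eq_self
      (hKt.pow_eq_self_of_add_smul_mem hb hnd hdim hv hvK s.2 hmem)
    refine ⟨s + r • ⟨v, self_mem_perp hv⟩, ?_, ?_⟩
    · show (1 : k) ⊗ₜ[ZMod p] ((s : Vt) + r • v) ∈ Kt
      rwa [TensorProduct.tmul_add, TensorProduct.tmul_smul, ← algebraMap_smul k r]
    · simpa using (lineV b v hv).smul_mem r (Submodule.mem_span_singleton_self _)
  · rintro ⟨s, hs, rfl⟩
    refine ⟨(1 : k) ⊗ₜ[ZMod p] s, ?_, by simp [qMap]⟩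
    rw [SetLike.mem_coe, Submodule.mem_comap, iotaPerp, LinearMap.baseChange_tmul]
    exact hs

theorem finrank_KcapV_piV (hKt : IsCharSub σ₀ b Kt) (hb : b.IsSymm) (hnd : b.Nondegenerate)
    (hdim : Module.finrank (ZMod p) Vt = 2 * σ₀) (hvK : (1 : k) ⊗ₜ[ZMod p] v ∉ Kt) :
    Module.finrank (ZMod p) (KcapV (piV k b v hv Kt)) =
      Module.finrank (ZMod p) ↥(KcapV Kt ⊓ perp b v) := by
  rw [KcapV_piV hv hKt hb hnd hdim hvK, Submodule.finrank_map_mkQ_of_disjoint,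
    ← Submodule.finrank_map_subtype_eq, Submodule.map_comap_subtype, inf_comm]
  refine Submodule.disjoint_def.mpr fun x hxW hxv => ?_
  obtain ⟨r, rfl⟩ := Submodule.mem_span_singleton.mp hxv
  rcases eq_or_ne r 0 with rfl | hr
  · exact zero_smul _ _
  · have hvW : v ∈ KcapV Kt := by simpa [hr] using (KcapV Kt).smul_mem r⁻¹ hxW
    exact absurd hvW hvK

end Projection

theorem stmt2_general (p : ℕ) [Fact p.Prime]
    (k : Type*) [Field k] [IsAlgClosed k] [CharP k p] [Algebra (ZMod p) k]
    (σ0 : ℕ)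
    (Vt : Type*) [AddCommGroup Vt] [Module (ZMod p) Vt]
    (b : LinearMap.BilinForm (ZMod p) Vt)
    (hsymm : ∀ x y, b x y = b y x) (hnd : Nondeg b) (hnn : NonNeutral b)
    (hdim : Module.finrank (ZMod p) Vt = 2 * σ0 + 2)
    (v : Vt) (hv : b v v = 0)
    (Kt : Submodule k (k ⊗[ZMod p] Vt))
    (hKt : IsCharSub (σ0 + 1) b Kt)
    (hvK : (1 : k) ⊗ₜ[ZMod p] v ∉ Kt) :
    (KcapV Kt ≤ perp b v →
      σ0 + 1 - Module.finrank (ZMod p) ↥(KcapV Kt) =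
        (σ0 - Module.finrank (ZMod p) ↥(KcapV (piV k b v hv Kt))) + 1) ∧
    (¬ KcapV Kt ≤ perp b v →
      σ0 + 1 - Module.finrank (ZMod p) ↥(KcapV Kt) =
        σ0 - Module.finrank (ZMod p) ↥(KcapV (piV k b v hv Kt))) := by
  have : FiniteDimensional (ZMod p) Vt := .of_finrank_pos (by omega)
  have hb : b.IsSymm := ⟨hsymm⟩
  have hdim' : Module.finrank (ZMod p) Vt = 2 * (σ0 + 1) := by omega
  have hW := hKt.finrank_KcapV_lt hnn hdim'
  rw [finrank_KcapV_piV hv hKt hb (hb.isRefl.nondegenerate_iff_separatingLeft.mpr hnd) hdim' hvK]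
  refine ⟨fun hle => ?_, fun hnle => ?_⟩
  · rw [inf_eq_left.mpr hle]
    omega
  · rw [← Submodule.finrank_inf_ker_add_one (f := b v) hnle]
    exact Nat.add_sub_add_right σ0 1 _

theorem stmt2 (p : ℕ) [Fact p.Prime] (hp : p ≠ 2)
    (k : Type*) [Field k] [IsAlgClosed k] [CharP k p] [Algebra (ZMod p) k]
    (σ0 : ℕ)
    (Vt : Type*) [AddCommGroup Vt] [Module (ZMod p) Vt]
    (b : LinearMap.BilinForm (ZMod p) Vt)
    (hsymm : ∀ x y, b x y = b y x) (hnd : Nondeg b) (hnn : NonNeutral b)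
    (hdim : Module.finrank (ZMod p) Vt = 2 * σ0 + 2)
    (v : Vt) (hv0 : v ≠ 0) (hv : b v v = 0)
    (Kt : Submodule k (k ⊗[ZMod p] Vt))
    (hKt : IsCharSub (σ0 + 1) b Kt)
    (hvK : (1 : k) ⊗ₜ[ZMod p] v ∉ Kt) :
    (KcapV Kt ≤ perp b v →
      σ0 + 1 - Module.finrank (ZMod p) ↥(KcapV Kt) =
        (σ0 - Module.finrank (ZMod p) ↥(KcapV (piV k b v hv Kt))) + 1) ∧
    (¬ KcapV Kt ≤ perp b v →
      σ0 + 1 - Module.finrank (ZMod p) ↥(KcapV Kt) =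
        σ0 - Module.finrank (ZMod p) ↥(KcapV (piV k b v hv Kt))) :=
  stmt2_general p k σ0 Vt b hsymm hnd hnn hdim v hv Kt hKt hvK
end

section
/- Let p be a prime and n ≥ 1. There exists a nonzero constant c ∈ F_p, depending only on n and p, such that for every field k of characteristic p and all λ_0, …, λ_{n−1} ∈ k, the determinant of the n×n matrix whose (i,j) entry is λ_i^{p^j} (0 ≤ i, j ≤ n−1) equals c · ∏_α (α_0 λ_0 + ⋯ + α_{n−1} λ_{n−1}), where the product runs over all nonzero vectors α = (α_0, …, α_{n−1}) ∈ F_p^n whose first nonzero coordinate equals 1 (a set of representatives for the points of P^{n−1}(F_p)). -/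
/-!
Work with the generic Moore determinant `D = det (X i ^ p ^ j)` over `𝔽_p[X_0, …, X_{n-1}]`.
Since `x ↦ x ^ p ^ j` is `𝔽_p`-linear, replacing row `i` of the matrix by the combination of rows
with coefficients `α` produces the row `(L ^ p ^ j)_j` of the linear form `L = ∑ α i • X i` and
multiplies `D` by `α i`; so every nonzero `L` divides `D`. The forms indexed by normalized
vectors are pairwise non-associated primes, so their product divides `D`. Both sides are
homogeneous of degree `1 + p + ⋯ + p ^ (n - 1)`, so the quotient is a constant, which is nonzero
because the monomial `∏ X j ^ p ^ j` occurs in `D` with coefficient `1`.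
Specializing `X ↦ λ` gives the identity in every field of characteristic `p`.
-/

open Finset MvPolynomial

theorem Finset.prod_dvd_of_prime_of_pairwise_not_associated {ι M : Type*}
    [CommMonoidWithZero M] [IsCancelMulZero M] {s : Finset ι} {f : ι → M} {z : M}
    (hprime : ∀ i ∈ s, Prime (f i))
    (hassoc : (s : Set ι).Pairwise fun i j => ¬Associated (f i) (f j))
    (hdvd : ∀ i ∈ s, f i ∣ z) : ∏ i ∈ s, f i ∣ z := by
  classical
  induction s using Finset.induction_on generalizing z with
  | empty => simp
  | insert a s ha ih =>
    obtain ⟨m, rfl⟩ := hdvd a (mem_insert_self a s)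
    rw [prod_insert ha]
    refine mul_dvd_mul_left _ (ih (fun i hi => hprime i (mem_insert_of_mem hi))
      (hassoc.mono (by simp)) fun i hi => ?_)
    have hi' : i ∈ insert a s := mem_insert_of_mem hi
    refine ((hprime i hi').dvd_or_dvd (hdvd i hi')).resolve_left fun hia => ?_
    exact hassoc hi' (mem_insert_self a s) (ne_of_mem_of_not_mem hi ha)
      ((hprime i hi').associated_of_dvd (hprime a (mem_insert_self a s)) hia)

namespace MvPolynomial

theorem eq_C_of_mul_eq_of_totalDegree_eq {σ R : Type*} [CommRing R] [IsDomain R]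
    {f g h : MvPolynomial σ R} (hfg : f * g = h) (hh : h ≠ 0)
    (hdeg : f.totalDegree = h.totalDegree) : g = C (g.coeff 0) := by
  rw [← totalDegree_eq_zero_iff_eq_C]
  have hf : f ≠ 0 := left_ne_zero_of_mul (hfg ▸ hh)
  have hg : g ≠ 0 := right_ne_zero_of_mul (hfg ▸ hh)
  have := totalDegree_mul_of_isDomain hf hg
  rw [hfg] at this
  omega

section LinearForm

variable {σ K : Type*} [Fintype σ] [Field K]

noncomputable def linearForm (α : σ → K) : MvPolynomial σ K :=
  ∑ i, α i • X i

theorem coeff_linearForm [DecidableEq σ] (α : σ → K) (j : σ) :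
    (linearForm α).coeff (Finsupp.single j 1) = α j := by
  simp [linearForm, coeff_sum, coeff_X, Finsupp.single_left_inj]

theorem linearForm_injective : Function.Injective (linearForm : (σ → K) → MvPolynomial σ K) := by
  classical
  intro α β h
  funext j
  rw [← coeff_linearForm α, ← coeff_linearForm β, h]

theorem C_mul_linearForm (c : K) (α : σ → K) : C c * linearForm α = linearForm (c • α) := by
  simp [linearForm, Finset.mul_sum, smul_eq_C_mul, mul_assoc]

theorem isHomogeneous_linearForm (α : σ → K) : (linearForm α).IsHomogeneous 1 :=
  IsHomogeneous.sum _ _ _ fun i _ =>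
    (homogeneousSubmodule σ K 1).smul_mem (α i) (isHomogeneous_X K i)

theorem totalDegree_linearForm {α : σ → K} (hα : α ≠ 0) : (linearForm α).totalDegree = 1 :=
  (isHomogeneous_linearForm α).totalDegree fun h => hα (linearForm_injective (by
    rw [h]; simp [linearForm]))

theorem prime_linearForm {α : σ → K} (hα : α ≠ 0) : Prime (linearForm α) := by
  classical
  refine UniqueFactorizationMonoid.irreducible_iff_prime.mp
    (irreducible_of_totalDegree_eq_one (totalDegree_linearForm hα) fun x hx => ?_)
  obtain ⟨j, hj⟩ := Function.ne_iff.mp hα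
  have := hx (Finsupp.single j 1)
  rw [coeff_linearForm] at this
  exact (ne_zero_of_dvd_ne_zero hj this).isUnit

theorem exists_eq_smul_of_associated_linearForm {α β : σ → K}
    (h : Associated (linearForm α) (linearForm β)) : ∃ c : K, β = c • α := by
  obtain ⟨u, hu⟩ := h
  obtain ⟨c, -, hc⟩ := isUnit_iff_eq_C_of_isReduced.mp u.isUnit
  refine ⟨c, linearForm_injective ?_⟩
  rw [← hu, hc, mul_comm, C_mul_linearForm]

theorem aeval_linearForm {A : Type*} [CommSemiring A] [Algebra K A] (x : σ → A) (α : σ → K) :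
    aeval x (linearForm α) = ∑ i, α i • x i := by
  simp [linearForm]

end LinearForm

end MvPolynomial

section NormalizedVectors

variable {K : Type*} [Fintype K] [DecidableEq K]

theorem card_filter_head_eq_and_tail (a : K) {n : ℕ} (P : (Fin n → K) → Prop) [DecidablePred P] :
    #(univ.filter fun α : Fin (n + 1) → K => α 0 = a ∧ P (Fin.tail α)) = #(univ.filter P) :=
  card_nbij' Fin.tail (Fin.cons (α := fun _ => K) a)
    (by simp +contextual [Set.MapsTo]) (by simp +contextual [Set.MapsTo])
    (fun α hα => by rw [← (mem_filter.mp (mem_coe.mp hα)).2.1, Fin.cons_self_tail])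
    (by simp [Set.RightInvOn, Set.LeftInvOn])

variable (K) [Zero K] [One K]

def normalizedVectors (n : ℕ) : Finset (Fin n → K) :=
  univ.filter fun α => ∃ i, α i = 1 ∧ ∀ j < i, α j = 0

variable {K}

theorem mem_normalizedVectors_succ {n : ℕ} {α : Fin (n + 1) → K} :
    α ∈ normalizedVectors K (n + 1) ↔
      α 0 = 1 ∨ α 0 = 0 ∧ Fin.tail α ∈ normalizedVectors K n := by
  simp only [normalizedVectors, mem_filter, mem_univ, true_and, Fin.exists_fin_succ,
    Fin.tail, Fin.forall_fin_succ, Fin.succ_lt_succ_iff, Fin.not_lt_zero, Fin.succ_pos]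
  grind

theorem card_normalizedVectors [NeZero (1 : K)] (n : ℕ) :
    #(normalizedVectors K n) = ∑ j ∈ range n, Fintype.card K ^ j := by
  induction n with
  | zero => simp [normalizedVectors]
  | succ n ih =>
    have hsplit : normalizedVectors K (n + 1) =
        univ.filter (fun α : Fin (n + 1) → K => α 0 = 1 ∧ True) ∪
          univ.filter fun α => α 0 = 0 ∧ Fin.tail α ∈ normalizedVectors K n := by
      ext α; simp [mem_normalizedVectors_succ]
    rw [hsplit, card_union_of_disjoint, card_filter_head_eq_and_tail 1 fun _ => True,
      card_filter_head_eq_and_tail]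
    · simp [ih, sum_range_succ, add_comm]
    · simp +contextual [disjoint_filter]

theorem ne_zero_of_mem_normalizedVectors [NeZero (1 : K)] {n : ℕ} {α : Fin n → K}
    (hα : α ∈ normalizedVectors K n) : α ≠ 0 := by
  obtain ⟨i, hi, -⟩ := (mem_filter.mp hα).2
  exact Function.ne_iff.mpr ⟨i, by simp [hi]⟩

end NormalizedVectors

theorem eq_of_smul_eq_of_mem_normalizedVectors {K : Type*} [Fintype K] [DecidableEq K]
    [MonoidWithZero K] [NeZero (1 : K)] {n : ℕ} {α β : Fin n → K} {c : K}
    (hα : α ∈ normalizedVectors K n) (hβ : β ∈ normalizedVectors K n) (h : β = c • α) :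
    α = β := by
  simp only [normalizedVectors, mem_filter, mem_univ, true_and] at hα hβ
  obtain ⟨i, hi, hlt⟩ := hα
  obtain ⟨j, hj, hltj⟩ := hβ
  subst h
  obtain rfl : i = j := by
    rcases lt_trichotomy i j with hij | rfl | hij
    · have hc : c = 0 := by simpa [hi] using hltj i hij
      simp [hc] at hj
    · rfl
    · simp [hlt j hij] at hj
  rw [Pi.smul_apply, hi, smul_eq_mul, mul_one] at hj
  rw [hj, one_smul]

section Alternant

variable {ι R : Type*} [Fintype ι] [DecidableEq ι] [CommRing R]

theorem isHomogeneous_det_X_pow (w : ι → ℕ) :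
    (Matrix.of fun i j => (X i : MvPolynomial ι R) ^ w j).det.IsHomogeneous (∑ j, w j) := by
  rw [Matrix.det_apply]
  refine IsHomogeneous.sum _ _ _ fun σ _ => ?_
  rw [Units.smul_def]
  exact (homogeneousSubmodule ι R _).smul_of_tower_mem _
    (IsHomogeneous.prod _ _ _ fun j _ => isHomogeneous_X_pow _ _)

theorem det_X_pow_ne_zero [Nontrivial R] {w : ι → ℕ} (hw : Function.Injective w) :
    (Matrix.of fun i j => (X i : MvPolynomial ι R) ^ w j).det ≠ 0 := by
  have hterm (σ : Equiv.Perm ι) : ∏ i, (X (σ i) : MvPolynomial ι R) ^ w i =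
      monomial (∑ i, Finsupp.single (σ i) (w i)) 1 := by
    simp [monomial_sum_one, X_pow_eq_monomial]
  have hdet : (Matrix.of fun i j => (X i : MvPolynomial ι R) ^ w j).det =
      ∑ σ : Equiv.Perm ι, Equiv.Perm.sign σ • monomial (∑ i, Finsupp.single (σ i) (w i)) 1 := by
    simp_rw [Matrix.det_apply, Matrix.of_apply, hterm]
  have hcoeff : (Matrix.of fun i j => (X i : MvPolynomial ι R) ^ w j).det.coeff
      (∑ i, Finsupp.single i (w i)) = 1 := by
    rw [hdet, coeff_sum, sum_eq_single 1]
    · simp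
    · intro σ _ hσ
      rw [Units.smul_def, coeff_smul, coeff_monomial, if_neg, smul_zero]
      intro h
      refine hσ (Equiv.ext fun i => hw ?_)
      have hi := DFunLike.congr_fun h (σ i)
      simp only [Finsupp.finsetSum_apply, Finsupp.single_apply, σ.injective.eq_iff] at hi
      simpa using hi.symm
    · simp
  intro h
  simp [h] at hcoeff

end Alternant

section MooreMatrix

variable {R : Type*} [CommRing R] (p : ℕ) {n : ℕ}

def mooreMatrix (x : Fin n → R) : Matrix (Fin n) (Fin n) R :=
  Matrix.of fun i j => x i ^ p ^ (j : ℕ)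

theorem RingHom.map_det_mooreMatrix {S : Type*} [CommRing S] (f : R →+* S) (x : Fin n → R) :
    f (mooreMatrix p x).det = (mooreMatrix p (f ∘ x)).det := by
  rw [f.map_det]
  congr 1
  ext i j
  simp [mooreMatrix]

variable {p} [Fact p.Prime] [CharP R p] [Algebra (ZMod p) R]

theorem sum_smul_pow_char_pow {ι : Type*} (s : Finset ι) (a : ι → ZMod p) (x : ι → R) (j : ℕ) :
    (∑ k ∈ s, a k • x k) ^ p ^ j = ∑ k ∈ s, a k • x k ^ p ^ j := by
  simp [sum_pow_char_pow, smul_pow, ZMod.pow_card_pow]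

theorem sum_smul_dvd_det_mooreMatrix (x : Fin n → R) {a : Fin n → ZMod p} (ha : a ≠ 0) :
    (∑ k, a k • x k) ∣ (mooreMatrix p x).det := by
  obtain ⟨i, hi⟩ := Function.ne_iff.mp ha
  set y := ∑ k, a k • x k
  have hrow : (fun j : Fin n => y ^ p ^ (j : ℕ)) =
      ∑ k, algebraMap (ZMod p) R (a k) • mooreMatrix p x k := by
    ext j
    simp [y, mooreMatrix, sum_smul_pow_char_pow, algebraMap_smul]
  have hfactor :
      (fun j : Fin n => y ^ p ^ (j : ℕ)) = y • fun j : Fin n => y ^ (p ^ (j : ℕ) - 1) := by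
    ext j
    simp [← pow_succ', Nat.sub_add_cancel (Nat.one_le_pow _ _ (Fact.out : p.Prime).pos)]
  have hdet := Matrix.det_updateRow_sum (mooreMatrix p x) i fun k => algebraMap (ZMod p) R (a k)
  rw [← hrow, hfactor, Matrix.det_updateRow_smul, smul_eq_mul] at hdet
  exact ((hi.isUnit.map (algebraMap (ZMod p) R)).dvd_mul_left).mp ⟨_, hdet.symm⟩

end MooreMatrix

theorem exists_det_mooreMatrix_X_eq {p : ℕ} [Fact p.Prime] (n : ℕ) :
    ∃ c : ZMod p, c ≠ 0 ∧ (mooreMatrix p (X : Fin n → MvPolynomial (Fin n) (ZMod p))).det =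
      C c * ∏ α ∈ normalizedVectors (ZMod p) n, linearForm α := by
  set D := (mooreMatrix p (X : Fin n → MvPolynomial (Fin n) (ZMod p))).det
  set P := ∏ α ∈ normalizedVectors (ZMod p) n, linearForm α
  have hprime (α) (hα : α ∈ normalizedVectors (ZMod p) n) : Prime (linearForm α) :=
    prime_linearForm (ne_zero_of_mem_normalizedVectors hα)
  have hD0 : D ≠ 0 := det_X_pow_ne_zero fun i j h =>
    Fin.ext (Nat.pow_right_injective (Fact.out : p.Prime).two_le h)
  have hPD : P ∣ D := by
    refine prod_dvd_of_prime_of_pairwise_not_associated hprime ?_ fun α hα =>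
      sum_smul_dvd_det_mooreMatrix X (ne_zero_of_mem_normalizedVectors hα)
    intro α hα β hβ hne hassoc
    obtain ⟨c, hc⟩ := exists_eq_smul_of_associated_linearForm hassoc
    exact hne (eq_of_smul_eq_of_mem_normalizedVectors hα hβ hc)
  have hdeg : P.totalDegree = D.totalDegree := by
    have hD : D.IsHomogeneous (∑ j : Fin n, p ^ (j : ℕ)) := isHomogeneous_det_X_pow _
    have hP : P.IsHomogeneous #(normalizedVectors (ZMod p) n) := by
      simpa using IsHomogeneous.prod _ _ (fun _ => 1) fun α _ => isHomogeneous_linearForm α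
    rw [hP.totalDegree (prod_ne_zero_iff.mpr fun α hα => (hprime α hα).ne_zero),
      hD.totalDegree hD0, card_normalizedVectors, ZMod.card,
      Fin.sum_univ_eq_sum_range (p ^ ·)]
  obtain ⟨q, hq⟩ := hPD
  have hqC := eq_C_of_mul_eq_of_totalDegree_eq hq.symm hD0 hdeg
  refine ⟨q.coeff 0, fun hc => hD0 ?_, ?_⟩
  · rw [hq, hqC, hc, C_0, mul_zero]
  · rw [hq, mul_comm, ← hqC]

theorem stmt8_general (p : ℕ) [Fact p.Prime] (n : ℕ) :
    ∃ c : ZMod p, c ≠ 0 ∧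
      ∀ (k : Type u) [Field k] [CharP k p] [Algebra (ZMod p) k] (lam : Fin n → k),
        Matrix.det (Matrix.of fun i j : Fin n => lam i ^ p ^ (j : ℕ)) =
          algebraMap (ZMod p) k c *
            ∏ α ∈ Finset.univ.filter
                (fun α : Fin n → ZMod p => ∃ i, α i = 1 ∧ ∀ j < i, α j = 0),
              ∑ i, α i • lam i := by
  obtain ⟨c, hc, hD⟩ := exists_det_mooreMatrix_X_eq (p := p) n
  refine ⟨c, hc, fun k _ _ _ lam => ?_⟩
  have hmap := (aeval (R := ZMod p) lam).toRingHom.map_det_mooreMatrix p X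
  rw [hD] at hmap
  simp only [AlgHom.toRingHom_eq_coe, RingHom.coe_coe, map_mul, aeval_C, map_prod,
    aeval_linearForm, mooreMatrix, Function.comp_def, aeval_X] at hmap
  exact hmap.symm

/-- The Moore determinant identity. For a prime `p` and `n ≥ 1` there is a
nonzero constant `c ∈ 𝔽_p`, depending only on `n` and `p`, such that for every field `k` of
characteristic `p` and all `λ₀, …, λ_{n-1} ∈ k`,
`det (λ_i^{p^j}) = c * ∏_α (α₀ λ₀ + ⋯ + α_{n-1} λ_{n-1})`,
the product being over the nonzero vectors `α ∈ 𝔽_p^n` whose first nonzero coordinate is `1`. -/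
theorem stmt8 (p : ℕ) [Fact p.Prime] (n : ℕ) (hn : 1 ≤ n) :
    ∃ c : ZMod p, c ≠ 0 ∧
      ∀ (k : Type u) [Field k] [CharP k p] [Algebra (ZMod p) k] (lam : Fin n → k),
        Matrix.det (Matrix.of fun i j : Fin n => lam i ^ p ^ (j : ℕ)) =
          algebraMap (ZMod p) k c *
            ∏ α ∈ Finset.univ.filter
                (fun α : Fin n → ZMod p => ∃ i, α i = 1 ∧ ∀ j < i, α j = 0),
              ∑ i, α i • lam i :=
  stmt8_general p n
end

section
/- Let k be a field of characteristic p and λ_0, …, λ_{n−1} ∈ k. The determinant of the n×n matrix whose (i,j) entry is λ_i^{p^j} (0 ≤ i, j ≤ n−1) is nonzero if and only if λ_0, …, λ_{n−1} are linearly independent over F_p. -/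
lemma zmod_pow_pow (p : ℕ) [Fact p.Prime] (a : ZMod p) (j : ℕ) : a ^ p ^ j = a := by
  induction j with
  | zero => simp
  | succ j ih => rw [pow_succ, pow_mul, ih, ZMod.pow_card]

lemma smul_pow_pow (p : ℕ) [Fact p.Prime] {k : Type*} [Field k] [CharP k p]
    [Algebra (ZMod p) k] (a : ZMod p) (x : k) (j : ℕ) :
    (a • x) ^ p ^ j = a • x ^ p ^ j := by
  rw [Algebra.smul_def, Algebra.smul_def, mul_pow, ← map_pow, zmod_pow_pow]

/-- The Moore determinant `det (λ_i^{p^j})` is nonzero if and only if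
`λ₀, …, λ_{n-1}` are linearly independent over `𝔽_p`. -/
theorem stmt9 (p : ℕ) [Fact p.Prime] (n : ℕ)
    (k : Type*) [Field k] [CharP k p] [Algebra (ZMod p) k] (lam : Fin n → k) :
    Matrix.det (Matrix.of fun i j : Fin n => lam i ^ p ^ (j : ℕ)) ≠ 0 ↔
      LinearIndependent (ZMod p) lam := by
  have hp1 : 1 < p := (Fact.out : p.Prime).one_lt
  constructor
  · -- det ≠ 0 → LI, contrapositive
    intro hdet
    rw [Fintype.linearIndependent_iff]
    intro g hg i0
    by_contra hgi
    apply hdet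
    rw [← Matrix.exists_vecMul_eq_zero_iff]
    refine ⟨fun i => algebraMap (ZMod p) k (g i), ?_, ?_⟩
    · intro h
      apply hgi
      have := congrFun h i0
      simpa using (algebraMap (ZMod p) k).injective (by simpa using this)
    · funext j
      simp only [Matrix.vecMul, dotProduct, Matrix.of_apply, Pi.zero_apply]
      have : (∑ i, g i • lam i) ^ p ^ (j : ℕ) = 0 := by
        rw [hg, zero_pow (by positivity)]
      rw [sum_pow_char_pow] at this
      rw [← this]
      refine Finset.sum_congr rfl fun i _ => ?_
      rw [smul_pow_pow, Algebra.smul_def]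
  · -- LI → det ≠ 0
    intro hli hdet
    classical
    rw [← Matrix.exists_mulVec_eq_zero_iff] at hdet
    obtain ⟨c, hc0, hc⟩ := hdet
    -- the additive polynomial
    set f : Polynomial k := ∑ j : Fin n, Polynomial.C (c j) * Polynomial.X ^ (p ^ (j : ℕ)) with hf
    obtain ⟨j0, hj0⟩ : ∃ j, c j ≠ 0 := by
      by_contra h
      push_neg at h
      exact hc0 (funext h)
    have hfne : f ≠ 0 := by
      intro h
      apply hj0
      have : f.coeff (p ^ (j0 : ℕ)) = c j0 := by
        rw [hf, Polynomial.finset_sum_coeff]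
        rw [Finset.sum_eq_single j0]
        · simp
        · intro j _ hj
          have : p ^ (j : ℕ) ≠ p ^ (j0 : ℕ) := fun h => hj (Fin.ext
            (Nat.pow_right_injective hp1 h))
          simp only [Polynomial.coeff_C_mul, Polynomial.coeff_X_pow]
          rw [if_neg (fun h' => this h'.symm), mul_zero]
        · simp
      rw [h] at this
      simpa using this.symm
    have hdeg : f.natDegree < p ^ n := by
      apply lt_of_le_of_lt (Polynomial.natDegree_sum_le _ _)
      rw [Finset.fold_max_lt]
      constructor
      · exact pow_pos (by omega) n
      · intro j _
        calc (Polynomial.C (c j) * Polynomial.X ^ (p ^ (j : ℕ))).natDegree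
            ≤ p ^ (j : ℕ) := by
              apply le_trans (Polynomial.natDegree_C_mul_le _ _)
              simp [Polynomial.natDegree_X_pow]
          _ < p ^ n := Nat.pow_lt_pow_right hp1 j.isLt
    -- every element of the span is a root
    have hroot : ∀ x ∈ Submodule.span (ZMod p) (Set.range lam), f.eval x = 0 := by
      intro x hx
      obtain ⟨a, rfl⟩ := (Submodule.mem_span_range_iff_exists_fun (ZMod p)).mp hx
      simp only [hf, Polynomial.eval_finset_sum, Polynomial.eval_mul, Polynomial.eval_C,
        Polynomial.eval_pow, Polynomial.eval_X]
      have : ∀ j : Fin n, (∑ i, a i • lam i) ^ p ^ (j : ℕ)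
          = ∑ i, a i • lam i ^ p ^ (j : ℕ) := by
        intro j
        rw [sum_pow_char_pow]
        exact Finset.sum_congr rfl fun i _ => smul_pow_pow p (a i) (lam i) j
      simp_rw [this, Finset.mul_sum]
      rw [Finset.sum_comm]
      have hci : ∀ i, ∑ x : Fin n, lam i ^ p ^ (x : ℕ) * c x = 0 := fun i => by
        simpa [Matrix.mulVec, dotProduct] using congrFun hc i
      refine Finset.sum_eq_zero fun i _ => ?_
      have : ∀ x : Fin n, c x * a i • lam i ^ p ^ (x : ℕ)
          = a i • (lam i ^ p ^ (x : ℕ) * c x) := fun x => by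
        rw [mul_smul_comm, mul_comm]
      simp_rw [this, ← Finset.smul_sum, hci, smul_zero]
    -- cardinality contradiction
    set S := Submodule.span (ZMod p) (Set.range lam)
    have : Module.Finite (ZMod p) S := by
      apply Module.Finite.span_of_finite
      exact Set.finite_range lam
    have : Finite S := Module.finite_of_finite (ZMod p)
    have : Fintype S := Fintype.ofFinite S
    have hcard : Fintype.card S = p ^ n := by
      rw [Module.card_eq_pow_finrank (K := ZMod p), ZMod.card,
        finrank_span_eq_card hli, Fintype.card_fin]
    have hinj : Function.Injective (fun x : S => (⟨(x : k), by
        rw [Multiset.mem_toFinset, Polynomial.mem_roots hfne]; exact hroot x x.2⟩ : {y // y ∈ f.roots.toFinset})) := by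
      intro x y hxy
      simp only [Subtype.mk.injEq] at hxy
      exact Subtype.ext hxy
    have := Fintype.card_le_of_injective _ hinj
    rw [hcard, Fintype.card_coe] at this
    have hle := f.roots.toFinset_card_le
    have := le_trans this (le_trans hle (Polynomial.card_roots' f))
    omega
end

section
/- Let Λ be a supersingular K3 lattice and Λ̃ = Λ ⊕ U2(p), with e, f the standard basis of the U2(p) summand (so ⟨e,e⟩ = ⟨f,f⟩ = 0, ⟨e,f⟩ = −p, and e ∈ pΛ̃*). Let v ∈ Λ̃0 = pΛ̃*/pΛ̃ be an isotropic vector such that the pairing of v with the class of e in Λ̃0 is nonzero. Then there exist l ∈ Λ and s ∈ ℤ such that x = f + l + s·e is a primitive isotropic vector of Λ̃ (necessarily ⟨l,l⟩ = 2ps) lying in pΛ̃*, and the image of x in Λ̃0 is a nonzero F_p-scalar multiple of v. -/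
section Lattices

variable (Q : Type*) [AddCommGroup Q] [Module ℚ Q]

/-- The dual lattice `L* = {x ∈ Q : ⟨x, y⟩ ∈ ℤ for all y ∈ L}` of a lattice `L` inside the
rational quadratic space `Q` (thought of as `L ⊗ ℚ`). -/
noncomputable def dualL (bQ : LinearMap.BilinForm ℚ Q) (L : Submodule ℤ Q) :
    Submodule ℤ Q :=
  ⨅ (y : Q) (_ : y ∈ L),
    Submodule.comap (LinearMap.restrictScalars ℤ (bQ.flip y))
      (LinearMap.range (Algebra.linearMap ℤ ℚ))

/-- Scaling a lattice by a natural number `p` (inside the ambient rational vector space). -/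
noncomputable def psmul (p : ℕ) (L : Submodule ℤ Q) : Submodule ℤ Q :=
  L.map (LinearMap.restrictScalars ℤ ((p : ℚ) • (LinearMap.id : Q →ₗ[ℚ] Q)))

/-- The quotient `B/A` of two lattices (`A` is intended to be contained in `B`). -/
noncomputable abbrev quotMod (A B : Submodule ℤ Q) := (↥B) ⧸ (A.comap B.subtype)

/-- A common generalization of (extended) supersingular K3 lattices: a full lattice
`L` of rank `r` in the rational quadratic space `(Q, bQ)` which is integral, even,
non-degenerate, whose Gram determinant is `dsign` times a nonzero rational square, which has
an orthogonal rational basis with `spos` positive squares and `sneg` negative squares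
(signature `(spos, sneg)`), and whose discriminant group `L*/L` is killed by `p`. -/
def IsK3Type (p : ℕ) (r : ℕ) (dsign : ℤ) (spos sneg : ℕ)
    (bQ : LinearMap.BilinForm ℚ Q) (L : Submodule ℤ Q) : Prop :=
  Submodule.span ℚ (L : Set Q) = ⊤ ∧
  (∀ x ∈ L, ∀ y ∈ L, ∃ n : ℤ, bQ x y = (n : ℚ)) ∧
  (∀ x ∈ L, ∃ n : ℤ, bQ x x = 2 * (n : ℚ)) ∧
  (∀ x : Q, (∀ y : Q, bQ x y = 0) → x = 0) ∧
  (∃ v : Module.Basis (Fin r) ℤ ↥L, ∃ q : ℚ, q ≠ 0 ∧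
    Matrix.det (Matrix.of fun i j : Fin r => bQ ((v i : Q)) ((v j : Q))) =
      (dsign : ℚ) * q ^ 2) ∧
  (∃ w : Module.Basis (Fin r) ℚ Q,
    (∀ i j, i ≠ j → bQ (w i) (w j) = 0) ∧
    (Finset.univ.filter fun i => 0 < bQ (w i) (w i)).card = spos ∧
    (Finset.univ.filter fun i => bQ (w i) (w i) < 0).card = sneg) ∧
  (∀ x ∈ dualL Q bQ L, (p : ℤ) • x ∈ L)

/-- A supersingular K3 lattice: even, non-degenerate, of rank 22, Gram determinant `-1`
times a square, signature `(1, 21)`, with `p`-torsion discriminant group. -/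
def IsSSK3 (p : ℕ) (bQ : LinearMap.BilinForm ℚ Q) (L : Submodule ℤ Q) : Prop :=
  IsK3Type Q p 22 (-1) 1 21 bQ L

/-- An extended supersingular K3 lattice: even, non-degenerate, of rank 24, Gram determinant
a square, signature `(2, 22)`, with `p`-torsion discriminant group. -/
def IsExtSSK3 (p : ℕ) (bQ : LinearMap.BilinForm ℚ Q) (L : Submodule ℤ Q) : Prop :=
  IsK3Type Q p 24 1 2 22 bQ L

/-- The standard integral lattice `ℤ² ⊆ ℚ²` (underlying `U₂` and `U₂(p)`). -/
noncomputable def intLat : Submodule ℤ (ℚ × ℚ) :=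
  Submodule.span ℤ {((1 : ℚ), (0 : ℚ)), ((0 : ℚ), (1 : ℚ))}

/-- The orthogonal sum of the form `bQ` on `Q` with the hyperbolic plane scaled by `c`:
on `Q × ℚ²`, `⟨(x,a,b), (x',a',b')⟩ = bQ x x' - c(ab' + a'b)`.  For `c = 1` this is
`⟨,⟩ ⊕ U₂`, for `c = p` it is `⟨,⟩ ⊕ U₂(p)`. -/
noncomputable def sumForm (c : ℚ) (bQ : LinearMap.BilinForm ℚ Q) :
    LinearMap.BilinForm ℚ (Q × ℚ × ℚ) :=
  LinearMap.mk₂ ℚ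
    (fun x y => bQ x.1 y.1 - c * (x.2.1 * y.2.2) - c * (x.2.2 * y.2.1))
    (fun m n o => by
      simp only [Prod.fst_add, Prod.snd_add, map_add, LinearMap.add_apply]
      ring)
    (fun a m n => by
      simp only [Prod.smul_fst, Prod.smul_snd, map_smul, LinearMap.smul_apply,
        smul_eq_mul]
      ring)
    (fun m n o => by
      simp only [Prod.fst_add, Prod.snd_add, map_add, LinearMap.add_apply]
      ring)
    (fun a m n => by
      simp only [Prod.smul_fst, Prod.smul_snd, map_smul, LinearMap.smul_apply,
        smul_eq_mul]
      ring)

end Lattices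

/-!
Write `z = z₁ + a e + b f`. Since `z ∈ pΛ̃*` and `pΛ* ⊆ Λ`, we have `z₁ ∈ Λ` and `a, b ∈ ℤ`, and
`⟨v, ē⟩ ≠ 0` says `p ∤ b`. Isotropy of `v` reads `⟨z₁, z₁⟩ ≡ 2pab mod p²`; as `Λ` is even and `p`
is odd, `N := ⟨z₁, z₁⟩ / 2 ≡ pab mod p²`. Choosing `c` with `cb ≡ 1 mod p`, the vector
`x = f + c z₁ + s e` with `s = c² N / p ∈ ℤ` is isotropic, lies in `pΛ̃*`, is primitive because its
`f`-coordinate is `1`, and `x - c z = (s - ca) e + (1 - cb) f ∈ pΛ̃`.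
-/

section Lattices

variable {Q : Type*} [AddCommGroup Q]

lemma mem_intLat_iff {x : ℚ × ℚ} : x ∈ intLat ↔ (∃ m : ℤ, x.1 = m) ∧ ∃ n : ℤ, x.2 = n := by
  constructor
  · intro hx
    induction hx using Submodule.span_induction with
    | mem y hy =>
      rcases hy with rfl | rfl
      exacts [⟨⟨1, by simp⟩, ⟨0, by simp⟩⟩, ⟨⟨0, by simp⟩, ⟨1, by simp⟩⟩]
    | zero => exact ⟨⟨0, by simp⟩, ⟨0, by simp⟩⟩
    | add y y' _ _ hy hy' =>
      obtain ⟨⟨m, hm⟩, ⟨n, hn⟩⟩ := hy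
      obtain ⟨⟨m', hm'⟩, ⟨n', hn'⟩⟩ := hy'
      exact ⟨⟨m + m', by simp [hm, hm']⟩, ⟨n + n', by simp [hn, hn']⟩⟩
    | smul k y _ hy =>
      obtain ⟨⟨m, hm⟩, ⟨n, hn⟩⟩ := hy
      exact ⟨⟨k * m, by simp [hm]⟩, ⟨k * n, by simp [hn]⟩⟩
  · rintro ⟨⟨m, hm⟩, ⟨n, hn⟩⟩
    have hx : x = m • ((1 : ℚ), (0 : ℚ)) + n • ((0 : ℚ), (1 : ℚ)) := by
      ext <;> simp [hm, hn]
    rw [hx]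
    exact add_mem (Submodule.smul_mem _ _ (Submodule.subset_span (by simp)))
      (Submodule.smul_mem _ _ (Submodule.subset_span (by simp)))

lemma mk_mem_prod_intLat_iff {L : Submodule ℤ Q} {x : Q} {s t : ℚ} :
    ((x, s, t) : Q × ℚ × ℚ) ∈ L.prod intLat ↔
      x ∈ L ∧ (∃ m : ℤ, s = m) ∧ ∃ n : ℤ, t = n := by
  simp only [Submodule.mem_prod, mem_intLat_iff]

lemma not_exists_eq_smul_of_snd_snd_eq_one {L : Submodule ℤ Q} {x : Q × ℚ × ℚ}
    (hx : x.2.2 = 1) : ¬ ∃ m : ℤ, 1 < m ∧ ∃ y ∈ L.prod intLat, x = m • y := by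
  rintro ⟨m, hm, y, hy, rfl⟩
  obtain ⟨-, -, ⟨n, hn⟩⟩ := mk_mem_prod_intLat_iff.mp hy
  have hmn : m * n = 1 := by
    change m • y.2.2 = 1 at hx
    rw [hn, zsmul_eq_mul] at hx
    exact_mod_cast hx
  have := Int.le_of_dvd one_pos ⟨n, hmn.symm⟩
  omega

variable [Module ℚ Q]

@[simp]
lemma sumForm_apply (c : ℚ) (bQ : LinearMap.BilinForm ℚ Q) (x y : Q × ℚ × ℚ) :
    sumForm Q c bQ x y = bQ x.1 y.1 - c * (x.2.1 * y.2.2) - c * (x.2.2 * y.2.1) := rfl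

lemma mem_dualL_iff {bQ : LinearMap.BilinForm ℚ Q} {L : Submodule ℤ Q} {x : Q} :
    x ∈ dualL Q bQ L ↔ ∀ y ∈ L, ∃ n : ℤ, bQ x y = n := by
  simp only [dualL, Submodule.mem_iInf, Submodule.mem_comap, LinearMap.mem_range,
    LinearMap.restrictScalars_apply, Algebra.linearMap_apply,
    algebraMap_int_eq, eq_comm, Int.coe_castRingHom]
  exact Iff.rfl

lemma mem_psmul_iff {p : ℕ} {L : Submodule ℤ Q} {x : Q} :
    x ∈ psmul Q p L ↔ ∃ y ∈ L, (p : ℚ) • y = x := by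
  simp only [psmul, Submodule.mem_map, LinearMap.restrictScalars_apply,
    LinearMap.smul_apply, LinearMap.id_apply]

lemma mem_psmul_dualL_iff {p : ℕ} (hp : p ≠ 0) {bQ : LinearMap.BilinForm ℚ Q}
    {L : Submodule ℤ Q} {x : Q} :
    x ∈ psmul Q p (dualL Q bQ L) ↔ ∀ y ∈ L, ∃ n : ℤ, bQ x y = p * n := by
  have hp' : (p : ℚ) ≠ 0 := Nat.cast_ne_zero.mpr hp
  rw [mem_psmul_iff]
  constructor
  · rintro ⟨w, hw, rfl⟩ y hy
    obtain ⟨n, hn⟩ := mem_dualL_iff.mp hw y hy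
    exact ⟨n, by simp [hn]⟩
  · intro h
    refine ⟨(p : ℚ)⁻¹ • x, mem_dualL_iff.mpr fun y hy => ?_, smul_inv_smul₀ hp' x⟩
    obtain ⟨n, hn⟩ := h y hy
    exact ⟨n, by simp [hn, hp']⟩

lemma psmul_dualL_le {p : ℕ} {bQ : LinearMap.BilinForm ℚ Q} {L : Submodule ℤ Q}
    (hL : ∀ x ∈ dualL Q bQ L, (p : ℤ) • x ∈ L) : psmul Q p (dualL Q bQ L) ≤ L := by
  rintro _ hx
  obtain ⟨w, hw, rfl⟩ := mem_psmul_iff.mp hx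
  simpa [← Int.cast_smul_eq_zsmul ℚ] using hL w hw

lemma mk_mem_psmul_prod_intLat {p : ℕ} {L : Submodule ℤ Q} {s t : ℤ} :
    ((0, (p * s : ℚ), (p * t : ℚ)) : Q × ℚ × ℚ) ∈ psmul (Q × ℚ × ℚ) p (L.prod intLat) :=
  mem_psmul_iff.mpr ⟨(0, s, t), mk_mem_prod_intLat_iff.mpr ⟨zero_mem L, ⟨s, rfl⟩, ⟨t, rfl⟩⟩,
    by simp⟩

/-- Because `U₂(p)* = p⁻¹ U₂(p)`, the `U₂(p)`-part of `pΛ̃*` is just `ℤ²`. -/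
lemma mk_mem_psmul_dualL_sumForm_iff {p : ℕ} (hp : p ≠ 0) {bQ : LinearMap.BilinForm ℚ Q}
    {L : Submodule ℤ Q} {x : Q} {s t : ℚ} :
    ((x, s, t) : Q × ℚ × ℚ) ∈
        psmul (Q × ℚ × ℚ) p (dualL (Q × ℚ × ℚ) (sumForm Q p bQ) (L.prod intLat)) ↔
      x ∈ psmul Q p (dualL Q bQ L) ∧ (∃ m : ℤ, s = m) ∧ ∃ n : ℤ, t = n := by
  have hp' : (p : ℚ) ≠ 0 := Nat.cast_ne_zero.mpr hp
  simp only [mem_psmul_dualL_iff hp, Prod.forall, mk_mem_prod_intLat_iff, sumForm_apply]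
  constructor
  · intro h
    refine ⟨fun y hy => ?_, ?_, ?_⟩
    · simpa using h y 0 0 ⟨hy, ⟨0, by simp⟩, ⟨0, by simp⟩⟩
    · obtain ⟨n, hn⟩ := h 0 0 1 ⟨zero_mem L, ⟨0, by simp⟩, ⟨1, by simp⟩⟩
      simp only [map_zero, mul_one, mul_zero, sub_zero, zero_sub] at hn
      exact ⟨-n, mul_left_cancel₀ hp' (by push_cast; linarith)⟩
    · obtain ⟨n, hn⟩ := h 0 1 0 ⟨zero_mem L, ⟨1, by simp⟩, ⟨0, by simp⟩⟩
      simp only [map_zero, mul_one, mul_zero, sub_zero, zero_sub] at hn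
      exact ⟨-n, mul_left_cancel₀ hp' (by push_cast; linarith)⟩
  · rintro ⟨hx, ⟨m, rfl⟩, ⟨n, rfl⟩⟩ y a b ⟨hy, ⟨a', rfl⟩, ⟨b', rfl⟩⟩
    obtain ⟨k, hk⟩ := hx y hy
    exact ⟨k - m * b' - n * a', by push_cast [hk]; ring⟩

end Lattices

/-- `N` plays `⟨z₁, z₁⟩ / 2`; `c` and `s` are the coefficients of the isotropic vector
`f + c z₁ + s e`. -/
lemma exists_isotropic_coeffs {p : ℕ} (hp : p.Prime) (hp2 : p ≠ 2) {N a b : ℤ}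
    (hb : ¬ (p : ℤ) ∣ b) (hN : (p : ℤ) ^ 2 ∣ 2 * N - 2 * p * a * b) :
    ∃ c s : ℤ, ¬ (p : ℤ) ∣ c ∧ c ^ 2 * N = p * s ∧ (p : ℤ) ∣ s - c * a ∧ (p : ℤ) ∣ 1 - c * b := by
  have hcop : IsCoprime ((p : ℤ) ^ 2) 2 :=
    (Nat.isCoprime_iff_coprime.mpr ((Nat.coprime_primes hp Nat.prime_two).mpr hp2)).pow_left
  obtain ⟨k, hk⟩ := hcop.dvd_of_dvd_mul_left (show (p : ℤ) ^ 2 ∣ 2 * (N - p * a * b) by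
    convert hN using 1; ring)
  obtain ⟨u, c, huc⟩ := ((Nat.prime_iff_prime_int.mp hp).coprime_iff_not_dvd.mpr hb)
  refine ⟨c, c ^ 2 * (a * b + p * k), fun ⟨d, hd⟩ => ?_, by linear_combination c ^ 2 * hk,
    ⟨c ^ 2 * k - c * a * u, by linear_combination c * a * huc⟩, ⟨u, by linear_combination -huc⟩⟩
  exact (Nat.prime_iff_prime_int.mp hp).not_dvd_one ⟨u + d * b, by linear_combination -huc + b * hd⟩

theorem stmt17_general (p : ℕ) [Fact p.Prime] (hp : p ≠ 2)
    (Q : Type*) [AddCommGroup Q] [Module ℚ Q]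
    (bQ : LinearMap.BilinForm ℚ Q)
    (Λ : Submodule ℤ Q) (hΛ : IsSSK3 Q p bQ Λ)
    (z : Q × ℚ × ℚ)
    (hz : z ∈ psmul (Q × ℚ × ℚ) p
      (dualL (Q × ℚ × ℚ) (sumForm Q (p : ℚ) bQ) (Λ.prod intLat)))
    (hziso : ∃ m : ℤ, sumForm Q (p : ℚ) bQ z z = (p : ℚ) ^ 2 * (m : ℚ))
    (hze : ¬ ∃ m : ℤ,
      sumForm Q (p : ℚ) bQ z ((0 : Q), (1 : ℚ), (0 : ℚ)) = (p : ℚ) ^ 2 * (m : ℚ)) :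
    ∃ (l : Q) (s : ℤ), l ∈ Λ ∧
      ((l, (s : ℚ), (1 : ℚ)) : Q × ℚ × ℚ) ∈
        psmul (Q × ℚ × ℚ) p
          (dualL (Q × ℚ × ℚ) (sumForm Q (p : ℚ) bQ) (Λ.prod intLat)) ∧
      (¬ ∃ m : ℤ, 1 < m ∧ ∃ y ∈ Λ.prod intLat,
        ((l, (s : ℚ), (1 : ℚ)) : Q × ℚ × ℚ) = m • y) ∧
      sumForm Q (p : ℚ) bQ (l, (s : ℚ), (1 : ℚ)) (l, (s : ℚ), (1 : ℚ)) = 0 ∧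
      bQ l l = 2 * (p : ℚ) * (s : ℚ) ∧
      ∃ c : ℤ, ¬ ((p : ℤ) ∣ c) ∧
        ((l, (s : ℚ), (1 : ℚ)) : Q × ℚ × ℚ) - c • z ∈
          psmul (Q × ℚ × ℚ) p (Λ.prod intLat) := by
  have hp0 : p ≠ 0 := (Fact.out : p.Prime).ne_zero
  obtain ⟨z₁, za, zb⟩ := z
  obtain ⟨hz₁, ⟨a, rfl⟩, ⟨b, rfl⟩⟩ := (mk_mem_psmul_dualL_sumForm_iff hp0).mp hz
  have hz₁Λ : z₁ ∈ Λ := psmul_dualL_le hΛ.2.2.2.2.2.2 hz₁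
  obtain ⟨N, hN⟩ := hΛ.2.2.1 z₁ hz₁Λ
  have hb : ¬ (p : ℤ) ∣ b := fun ⟨k, hk⟩ => hze ⟨-k, by simp [hk]; ring⟩
  have hiso : (p : ℤ) ^ 2 ∣ 2 * N - 2 * p * a * b := by
    obtain ⟨m, hm⟩ := hziso
    simp only [sumForm_apply, hN] at hm
    have hmQ : (2 * N - 2 * p * a * b : ℚ) = p ^ 2 * m := by linear_combination hm
    exact ⟨m, by exact_mod_cast hmQ⟩
  obtain ⟨c, s, hc, hs, ⟨d, hd⟩, ⟨e, he⟩⟩ := exists_isotropic_coeffs Fact.out hp hb hiso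
  have hl : bQ (c • z₁) (c • z₁) = 2 * p * s := by
    have hsQ : (c : ℚ) ^ 2 * N = p * s := by exact_mod_cast hs
    simp only [map_zsmul, LinearMap.smul_apply, hN, zsmul_eq_mul]
    linear_combination 2 * hsQ
  refine ⟨c • z₁, s, Λ.smul_mem c hz₁Λ,
    (mk_mem_psmul_dualL_sumForm_iff hp0).mpr ⟨Submodule.smul_mem _ c hz₁, ⟨s, rfl⟩, ⟨1, by simp⟩⟩,
    not_exists_eq_smul_of_snd_snd_eq_one rfl, by simp only [sumForm_apply, hl]; ring, hl,
    c, hc, ?_⟩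
  simp only [Prod.smul_mk, Prod.mk_sub_mk, sub_self]
  convert mk_mem_psmul_prod_intLat (L := Λ) (s := d) (t := e) using 3 <;> rw [zsmul_eq_mul]
  · exact_mod_cast hd
  · exact_mod_cast he

theorem stmt17 (p : ℕ) [Fact p.Prime] (hp : p ≠ 2)
    (Q : Type*) [AddCommGroup Q] [Module ℚ Q]
    (bQ : LinearMap.BilinForm ℚ Q) (hsymm : ∀ x y, bQ x y = bQ y x)
    (Λ : Submodule ℤ Q) (hΛ : IsSSK3 Q p bQ Λ)
    (z : Q × ℚ × ℚ)
    (hz : z ∈ psmul (Q × ℚ × ℚ) p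
      (dualL (Q × ℚ × ℚ) (sumForm Q (p : ℚ) bQ) (Λ.prod intLat)))
    (hz0 : z ∉ psmul (Q × ℚ × ℚ) p (Λ.prod intLat))
    (hziso : ∃ m : ℤ, sumForm Q (p : ℚ) bQ z z = (p : ℚ) ^ 2 * (m : ℚ))
    (hze : ¬ ∃ m : ℤ,
      sumForm Q (p : ℚ) bQ z ((0 : Q), (1 : ℚ), (0 : ℚ)) = (p : ℚ) ^ 2 * (m : ℚ)) :
    ∃ (l : Q) (s : ℤ), l ∈ Λ ∧
      ((l, (s : ℚ), (1 : ℚ)) : Q × ℚ × ℚ) ∈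
        psmul (Q × ℚ × ℚ) p
          (dualL (Q × ℚ × ℚ) (sumForm Q (p : ℚ) bQ) (Λ.prod intLat)) ∧
      (¬ ∃ m : ℤ, 1 < m ∧ ∃ y ∈ Λ.prod intLat,
        ((l, (s : ℚ), (1 : ℚ)) : Q × ℚ × ℚ) = m • y) ∧
      sumForm Q (p : ℚ) bQ (l, (s : ℚ), (1 : ℚ)) (l, (s : ℚ), (1 : ℚ)) = 0 ∧
      bQ l l = 2 * (p : ℚ) * (s : ℚ) ∧
      ∃ c : ℤ, ¬ ((p : ℤ) ∣ c) ∧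
        ((l, (s : ℚ), (1 : ℚ)) : Q × ℚ × ℚ) - c • z ∈
          psmul (Q × ℚ × ℚ) p (Λ.prod intLat) :=
  stmt17_general p hp Q bQ Λ hΛ z hz hziso hze
end
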